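/- Let n ≥ 1 and let S be a finite set of arcs of M̄_n which is connected, has complete orbit and is minimal. Then no element of S is a short arc. (Equivalently: an indecomposable object of the Paquette–Yıldırım category C̄_n corresponding to a short arc cannot be a direct summand of a minimal strong generator of C̄_n.) -/

import Mathlib

/-! Combinatorial model of the Paquette–Yıldırım completed cluster category `C̄ₙ`.

The set of marked points `M̄ₙ` consists of the marked points `(k, i)` (the `k`-th marked
point of the `i`-th segment, for `i : Fin n`) together with the accumulation points
(indexed by `Fin n`; `Sum.inr i` is the accumulation point `a_{i+1}` of the paper). -/

/-- The marked points of `M̄ₙ`: `Sum.inl (k, i)` is a marked point of a segment,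
`Sum.inr i` is an accumulation point. -/
abbrev MbarPt (n : ℕ) := (ℤ × Fin n) ⊕ Fin n

/-- The injection of `M̄ₙ` into the circle `ℝ/nℤ`, given by representatives in `[0, n)`:
the accumulation point `i` goes to `i`, and the marked point `(k, i)` goes to
`i + 1/2 + k/(2(|k|+1))`. -/
noncomputable def toCircle {n : ℕ} : MbarPt n → ℝ
  | Sum.inl (k, i) => (i : ℝ) + 1 / 2 + (k : ℝ) / (2 * (|(k : ℝ)| + 1))
  | Sum.inr i => (i : ℝ)

/-- `y` lies strictly between `x` and `z` in the cyclic order on `M̄ₙ` (going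
counterclockwise from `x` to `z`), expressed via the representatives in `[0, n)`. -/
def CycSBtw {n : ℕ} (x y z : MbarPt n) : Prop :=
  (toCircle x < toCircle y ∧ toCircle y < toCircle z) ∨
  (toCircle y < toCircle z ∧ toCircle z < toCircle x) ∨
  (toCircle z < toCircle x ∧ toCircle x < toCircle y)

/-- An arc of `M̄ₙ` is an unordered pair of distinct points of `M̄ₙ` which is not a pair
of consecutive marked points `{(k,i), (k+1,i)}` of a segment. -/
def IsArc {n : ℕ} (p : Sym2 (MbarPt n)) : Prop :=
  ¬ p.IsDiag ∧ ∀ (k : ℤ) (i : Fin n),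
    p ≠ s(Sum.inl (k, i), Sum.inl (k + 1, i))

/-- The `m`-fold clockwise rotation of a point: marked points `(k, i)` move to `(k - m, i)`,
accumulation points are fixed. -/
def rotPt {n : ℕ} (m : ℤ) : MbarPt n → MbarPt n
  | Sum.inl (k, i) => Sum.inl (k - m, i)
  | Sum.inr i => Sum.inr i

/-- The `m`-fold clockwise rotation `ℓ⟦m⟧` of an arc. -/
def rotArc {n : ℕ} (m : ℤ) (p : Sym2 (MbarPt n)) : Sym2 (MbarPt n) :=
  Sym2.map (rotPt m) p

/-- `p` and `q` are rotations of one another. -/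
def SameRot {n : ℕ} (p q : Sym2 (MbarPt n)) : Prop :=
  ∃ m : ℤ, p = rotArc m q

/-- The rotation closure `R(S)` of a set of arcs `S`. -/
def RClos {n : ℕ} (S : Set (Sym2 (MbarPt n))) : Set (Sym2 (MbarPt n)) :=
  {q | ∃ p ∈ S, ∃ m : ℤ, q = rotArc m p}

/-- Two arcs cross if their endpoints alternate in the cyclic order: exactly one
endpoint of one lies strictly between the two endpoints of the other. -/
def Crosses {n : ℕ} (p q : Sym2 (MbarPt n)) : Prop :=
  ∃ x y z w : MbarPt n, p = s(x, y) ∧ q = s(z, w) ∧ CycSBtw x z y ∧ CycSBtw y w x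

/-- Adjacency `ℓ ~ ℓ'` of arcs: they cross, or they are distinct and share an endpoint
which is an accumulation point. -/
def Adj {n : ℕ} (p q : Sym2 (MbarPt n)) : Prop :=
  Crosses p q ∨ (p ≠ q ∧ ∃ i : Fin n, (Sum.inr i : MbarPt n) ∈ p ∧ (Sum.inr i : MbarPt n) ∈ q)

/-- Paths of length `m` in the graph with vertex set `T` and edge relation `Adj`. -/
def AdjChain {n : ℕ} (T : Set (Sym2 (MbarPt n))) : ℕ → Sym2 (MbarPt n) → Sym2 (MbarPt n) → Prop
  | 0, p, q => p = q
  | m + 1, p, q => ∃ r ∈ T, Adj p r ∧ AdjChain T m r q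

/-- `S` is connected: the graph with vertex set `R(S)` and edge relation `~` is connected. -/
def ConnectedArcs {n : ℕ} (S : Set (Sym2 (MbarPt n))) : Prop :=
  ∀ p ∈ RClos S, ∀ q ∈ RClos S, ∃ m : ℕ, AdjChain (RClos S) m p q

/-- `S` has complete orbit: every point of `M̄ₙ` is an endpoint of some arc of `R(S)`. -/
def CompleteOrbit {n : ℕ} (S : Set (Sym2 (MbarPt n))) : Prop :=
  ∀ x : MbarPt n, ∃ p ∈ RClos S, x ∈ p

/-- `S` is minimal: removing any arc of `S` destroys connectedness or completeness of orbit. -/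
def MinimalArcSet {n : ℕ} (S : Set (Sym2 (MbarPt n))) : Prop :=
  ∀ ℓ ∈ S, ¬ (ConnectedArcs (S \ {ℓ}) ∧ CompleteOrbit (S \ {ℓ}))

/-- The homological length of (a connected) `S` is at most `d`: any two vertices of
`R(S)` are joined by a `~`-path of length at most `d`. -/
def HLenLE {n : ℕ} (S : Set (Sym2 (MbarPt n))) (d : ℕ) : Prop :=
  ∀ p ∈ RClos S, ∀ q ∈ RClos S, ∃ m ≤ d, AdjChain (RClos S) m p q

/-- The homological length of (a connected) `S` is exactly `d`: every pair of vertices of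
`R(S)` is joined by a path of length `≤ d`, and some pair admits no path of length `< d`. -/
def HLenEq {n : ℕ} (S : Set (Sym2 (MbarPt n))) (d : ℕ) : Prop :=
  HLenLE S d ∧ ∃ p ∈ RClos S, ∃ q ∈ RClos S, ∀ m < d, ¬ AdjChain (RClos S) m p q

/-- An arc is a short arc if both of its endpoints are marked points of the same segment. -/
def IsShortArc {n : ℕ} (p : Sym2 (MbarPt n)) : Prop :=
  ∃ (k k' : ℤ) (i : Fin n), p = s(Sum.inl (k, i), Sum.inl (k', i))

/-!
Let `ℓ ∈ S` be a short arc on the `i`-th segment; we show that `S ∖ {ℓ}` is still connected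
with complete orbit, contradicting minimality.

An arc crossing a rotation of `ℓ` has an endpoint strictly inside segment `i`, because `ℓ`
spans only points of that segment (and has no accumulation endpoint). Conversely, arcs of
`R(S ∖ {ℓ})` with an endpoint on segment `i` are all linked to one another: such an arc is
adjacent to its rotation by one step, and some rotation of one of them equals or is adjacent
to the other. So any path of `R(S)` can be rerouted around the rotations of `ℓ`. Following a
path from `ℓ` to an arc ending at the accumulation point `aᵢ` produces an arc of `S ∖ {ℓ}`
with an endpoint on segment `i`; its rotations cover that segment, while the rest of `M̄ₙ` was
never covered by rotations of `ℓ`.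
-/

/-- Strict cyclic betweenness of three reals; `CycSBtw` is this predicate on positions. -/
def LinSBtw (a b c : ℝ) : Prop :=
  (a < b ∧ b < c) ∨ (b < c ∧ c < a) ∨ (c < a ∧ a < b)

theorem LinSBtw.swap {a b c d : ℝ} (h₁ : LinSBtw a c b) (h₂ : LinSBtw b d a) :
    LinSBtw c b d ∧ LinSBtw d a c := by
  unfold LinSBtw at *
  rcases h₁ with ⟨_, _⟩ | ⟨_, _⟩ | ⟨_, _⟩ <;> rcases h₂ with ⟨_, _⟩ | ⟨_, _⟩ | ⟨_, _⟩ <;>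
    constructor <;>
    first
      | exact Or.inl ⟨by linarith, by linarith⟩
      | exact Or.inr (Or.inl ⟨by linarith, by linarith⟩)
      | exact Or.inr (Or.inr ⟨by linarith, by linarith⟩)

theorem LinSBtw.of_lt {a b c d : ℝ} (hac : a < c) (hcb : c < b) (hd : d < a ∨ b < d) :
    LinSBtw a c b ∧ LinSBtw b d a := by
  refine ⟨Or.inl ⟨hac, hcb⟩, ?_⟩
  rcases hd with hd | hd
  · exact Or.inr (Or.inl ⟨hd, by linarith⟩)
  · exact Or.inr (Or.inr ⟨by linarith, hd⟩)

/-- A chord with both ends above `t` can only cross a chord with an end above `t`. -/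
theorem LinSBtw.lt_or_lt {a b c d t : ℝ} (h₁ : LinSBtw a c b) (h₂ : LinSBtw b d a)
    (ha : t < a) (hb : t < b) : t < c ∨ t < d := by
  by_contra! h
  unfold LinSBtw at h₁ h₂
  rcases h₁ with ⟨_, _⟩ | ⟨_, _⟩ | ⟨_, _⟩ <;> rcases h₂ with ⟨_, _⟩ | ⟨_, _⟩ | ⟨_, _⟩ <;> linarith

/-- Cutting `[0, N)` at `θ` and moving the upper part below the lower one is a rotation of
the circle `ℝ/Nℤ`, so it preserves cyclic betweenness. -/
theorem linSBtw_cut_iff {N θ a b c : ℝ} (ha : a ∈ Set.Ico 0 N) (hb : b ∈ Set.Ico 0 N)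
    (hc : c ∈ Set.Ico 0 N) :
    LinSBtw (if θ ≤ a then a - N else a) (if θ ≤ b then b - N else b)
      (if θ ≤ c then c - N else c) ↔ LinSBtw a b c := by
  obtain ⟨_, _⟩ := ha
  obtain ⟨_, _⟩ := hb
  obtain ⟨_, _⟩ := hc
  unfold LinSBtw
  split_ifs <;> constructor <;> rintro (⟨_, _⟩ | ⟨_, _⟩ | ⟨_, _⟩) <;>
    first
      | exact Or.inl ⟨by linarith, by linarith⟩
      | exact Or.inr (Or.inl ⟨by linarith, by linarith⟩)
      | exact Or.inr (Or.inr ⟨by linarith, by linarith⟩)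

theorem div_two_mul_abs_add_one_strictMono :
    StrictMono fun x : ℝ => x / (2 * (|x| + 1)) := by
  intro x y hxy
  have hx : (0 : ℝ) < 2 * (|x| + 1) := by positivity
  have hy : (0 : ℝ) < 2 * (|y| + 1) := by positivity
  dsimp only
  rw [div_lt_div_iff₀ hx hy]
  rcases le_or_gt 0 x with h₁ | h₁ <;> rcases le_or_gt 0 y with h₂ | h₂
  · rw [abs_of_nonneg h₁, abs_of_nonneg h₂]; nlinarith
  · linarith
  · rw [abs_of_neg h₁, abs_of_nonneg h₂]; nlinarith
  · rw [abs_of_neg h₁, abs_of_neg h₂]; nlinarith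

theorem abs_div_two_mul_abs_add_one_lt (x : ℝ) : |x / (2 * (|x| + 1))| < 1 / 2 := by
  rw [abs_div, abs_of_pos (by positivity : (0 : ℝ) < 2 * (|x| + 1)),
    div_lt_iff₀ (by positivity)]
  linarith


section Reachability

variable {α : Type*}

abbrev ReachIn (r : α → α → Prop) (V : Set α) : α → α → Prop :=
  Relation.ReflTransGen fun p q => r p q ∧ q ∈ V

variable {r : α → α → Prop} {A B W : Set α}

theorem ReachIn.mono {V V' : Set α} (hV : V ⊆ V') {p q : α} (h : ReachIn r V p q) :
    ReachIn r V' p q :=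
  Relation.ReflTransGen.mono (fun _ _ hs => ⟨hs.1, hV hs.2⟩) _ _ h

theorem reachIn_of_reachIn_union (hr : ∀ a b, r a b → r b a)
    (hW : ∀ w ∈ W, ∀ w' ∈ W, ReachIn r A w w') (hBW : ∀ b ∈ B, ∀ a ∈ A, r b a → a ∈ W)
    (hABW : A ∩ B ⊆ W) {p q : α} (h : ReachIn r (A ∪ B) p q) (hq : q ∈ A) :
    (p ∈ A → ReachIn r A p q) ∧ (p ∈ B → ∃ w ∈ W, ReachIn r A w q) := by
  induction h using Relation.ReflTransGen.head_induction_on with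
  | refl => exact ⟨fun _ => .refl, fun hqB => ⟨q, hABW ⟨hq, hqB⟩, .refl⟩⟩
  | head hpc _ ih =>
    obtain ⟨hrpc, hcA | hcB⟩ := hpc
    · exact ⟨fun _ => .head ⟨hrpc, hcA⟩ (ih.1 hcA),
        fun hpB => ⟨_, hBW _ hpB _ hcA hrpc, ih.1 hcA⟩⟩
    · obtain ⟨w, hw, hwq⟩ := ih.2 hcB
      exact ⟨fun hpA => (hW _ (hBW _ hcB _ hpA (hr _ _ hrpc)) w hw).trans hwq,
        fun _ => ⟨w, hw, hwq⟩⟩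

end Reachability

theorem Fin.eq_of_cast_lt_add_one {n : ℕ} {i j : Fin n} (h₁ : (i : ℝ) < j + 1)
    (h₂ : (j : ℝ) < i + 1) : i = j := by
  have : (i : ℕ) < j + 1 := by exact_mod_cast h₁
  have : (j : ℕ) < i + 1 := by exact_mod_cast h₂
  exact Fin.ext (by omega)

namespace MbarPt

open Sum

variable {n : ℕ}

@[simp]
theorem toCircle_inr (i : Fin n) : toCircle (inr i : MbarPt n) = i := rfl

theorem toCircle_inl_strictMono (i : Fin n) :
    StrictMono fun k : ℤ => toCircle (inl (k, i) : MbarPt n) := by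
  intro k k' h
  have := div_two_mul_abs_add_one_strictMono (Int.cast_lt.mpr h : (k : ℝ) < k')
  simp only [toCircle] at this ⊢
  linarith

theorem toCircle_inl_mem (k : ℤ) (i : Fin n) :
    toCircle (inl (k, i) : MbarPt n) ∈ Set.Ioo (i : ℝ) (i + 1) := by
  have := abs_lt.mp (abs_div_two_mul_abs_add_one_lt (k : ℝ))
  simp only [toCircle, Set.mem_Ioo]
  constructor <;> linarith

theorem toCircle_mem (x : MbarPt n) : toCircle x ∈ Set.Ico (0 : ℝ) n := by
  rcases x with ⟨k, i⟩ | i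
  · obtain ⟨h₁, h₂⟩ := toCircle_inl_mem k i
    have : (i : ℝ) + 1 ≤ n := by exact_mod_cast i.isLt
    exact ⟨(Nat.cast_nonneg _).trans h₁.le, by linarith⟩
  · exact ⟨Nat.cast_nonneg _, by simp⟩

theorem toCircle_injective : Function.Injective (toCircle : MbarPt n → ℝ) := by
  intro x y h
  rcases x with ⟨k, i⟩ | i <;> rcases y with ⟨k', j⟩ | j
  · obtain ⟨hi₁, hi₂⟩ := toCircle_inl_mem k i
    obtain ⟨hj₁, hj₂⟩ := toCircle_inl_mem k' j
    obtain rfl : i = j := Fin.eq_of_cast_lt_add_one (by linarith) (by linarith)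
    rw [(toCircle_inl_strictMono i).injective h]
  · obtain ⟨h₁, h₂⟩ := toCircle_inl_mem k i
    rw [h, toCircle_inr] at h₁ h₂
    obtain rfl := Fin.eq_of_cast_lt_add_one (by linarith) h₂
    linarith
  · obtain ⟨h₁, h₂⟩ := toCircle_inl_mem k' j
    rw [← h, toCircle_inr] at h₁ h₂
    obtain rfl := Fin.eq_of_cast_lt_add_one (by linarith) h₂
    linarith
  · rw [toCircle_inr, toCircle_inr] at h
    exact congrArg inr (Fin.ext (by exact_mod_cast h))

/-- Position of a point on the circle cut open just after the `i`-th segment, so that this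
segment comes last: its points lie in `(i, i + 1)`, all other points at most `i`. -/
noncomputable def linPos (i : Fin n) (x : MbarPt n) : ℝ :=
  if (i : ℝ) + 1 ≤ toCircle x then toCircle x - n else toCircle x

theorem cycSBtw_iff_linSBtw (i : Fin n) {x y z : MbarPt n} :
    CycSBtw x y z ↔ LinSBtw (linPos i x) (linPos i y) (linPos i z) :=
  (linSBtw_cut_iff (toCircle_mem x) (toCircle_mem y) (toCircle_mem z)).symm

theorem linPos_injective (i : Fin n) : Function.Injective (linPos i : MbarPt n → ℝ) := by
  intro x y h
  obtain ⟨hx₁, hx₂⟩ := toCircle_mem x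
  obtain ⟨hy₁, hy₂⟩ := toCircle_mem y
  apply toCircle_injective
  unfold linPos at h
  split_ifs at h <;> linarith

theorem linPos_inl (i j : Fin n) (k : ℤ) :
    linPos i (inl (k, j)) = toCircle (inl (k, j) : MbarPt n) - if i < j then (n : ℝ) else 0 := by
  obtain ⟨h₁, h₂⟩ := toCircle_inl_mem k j
  unfold linPos
  by_cases hij : i < j
  · have : (i : ℝ) + 1 ≤ j := by exact_mod_cast Fin.lt_def.mp hij
    rw [if_pos (by linarith), if_pos hij]
  · have : (j : ℝ) ≤ i := by exact_mod_cast Fin.not_lt.mp hij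
    rw [if_neg (by linarith), if_neg hij, sub_zero]

theorem linPos_inl_strictMono (i j : Fin n) : StrictMono fun k : ℤ => linPos i (inl (k, j)) := by
  intro k k' h
  simp only [linPos_inl]
  linarith [toCircle_inl_strictMono j h]

theorem linPos_inl_self_mem (k : ℤ) (i : Fin n) :
    linPos i (inl (k, i)) ∈ Set.Ioo (i : ℝ) (i + 1) := by
  rw [linPos_inl, if_neg (lt_irrefl i), sub_zero]
  exact toCircle_inl_mem k i

theorem linPos_le_of_ne {i : Fin n} {x : MbarPt n} (hx : ∀ c, x ≠ inl (c, i)) :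
    linPos i x ≤ i := by
  rcases x with ⟨k, j⟩ | j
  · obtain ⟨h₁, h₂⟩ := toCircle_inl_mem k j
    have hj : (j : ℝ) + 1 ≤ n := by exact_mod_cast j.isLt
    rw [linPos_inl]
    rcases lt_trichotomy i j with hij | rfl | hij
    · rw [if_pos hij]
      linarith [(Nat.cast_nonneg i : (0 : ℝ) ≤ i)]
    · exact absurd rfl (hx k)
    · have : (j : ℝ) + 1 ≤ i := by exact_mod_cast Fin.lt_def.mp hij
      rw [if_neg (lt_asymm hij)]
      linarith
  · have hj : (j : ℝ) + 1 ≤ n := by exact_mod_cast j.isLt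
    rw [linPos, toCircle_inr]
    split_ifs with h
    · linarith [(Nat.cast_nonneg i : (0 : ℝ) ≤ i)]
    · have : (j : ℕ) < i + 1 := by exact_mod_cast (not_le.mp h)
      exact_mod_cast (by omega : (j : ℕ) ≤ i)

theorem exists_eq_inl_of_lt_linPos {i : Fin n} {x : MbarPt n} (hx : (i : ℝ) < linPos i x) :
    ∃ c, x = inl (c, i) := by
  by_contra! h
  exact (linPos_le_of_ne h).not_gt hx

end MbarPt

section Arcs

open Sum MbarPt

variable {n : ℕ}

@[simp]
theorem rotPt_inl (m k : ℤ) (i : Fin n) : rotPt m (inl (k, i) : MbarPt n) = inl (k - m, i) := rfl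

@[simp]
theorem rotPt_inr (m : ℤ) (i : Fin n) : rotPt m (inr i : MbarPt n) = inr i := rfl

@[simp]
theorem rotArc_mk (m : ℤ) (x y : MbarPt n) : rotArc m s(x, y) = s(rotPt m x, rotPt m y) := rfl

theorem rotPt_rotPt (m m' : ℤ) (x : MbarPt n) : rotPt m (rotPt m' x) = rotPt (m' + m) x := by
  rcases x with ⟨k, i⟩ | i <;> simp [sub_sub]

theorem rotPt_injective (m : ℤ) : Function.Injective (rotPt (n := n) m) :=
  Function.LeftInverse.injective (g := rotPt (-m)) fun x => by
    rcases x with ⟨k, i⟩ | i <;> simp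

theorem rotArc_rotArc (m m' : ℤ) (p : Sym2 (MbarPt n)) :
    rotArc m (rotArc m' p) = rotArc (m' + m) p := by
  induction p using Sym2.ind with
  | h x y => simp [rotPt_rotPt]

theorem rotArc_zero (p : Sym2 (MbarPt n)) : rotArc 0 p = p := by
  induction p using Sym2.ind with
  | h x y => rcases x with ⟨k, i⟩ | i <;> rcases y with ⟨k', j⟩ | j <;> simp

theorem rotArc_inl_sub (u p : ℤ) (i : Fin n) (x : MbarPt n) :
    rotArc (u - p) s(inl (u, i), x) = s(inl (p, i), rotPt (u - p) x) := by
  rw [rotArc_mk, rotPt_inl, sub_sub_cancel]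

theorem rotArc_short (a g t : ℤ) (i : Fin n) :
    rotArc t s(inl (a, i), inl (a + g, i)) = s(inl (a - t, i), inl (a - t + g, i)) := by
  rw [rotArc_mk, rotPt_inl, rotPt_inl, add_sub_right_comm]

theorem rotPt_ne_inl {i : Fin n} {x : MbarPt n} (hx : ∀ c, x ≠ inl (c, i)) (m c : ℤ) :
    rotPt m x ≠ inl (c, i) := by
  rcases x with ⟨k, j⟩ | j
  · simp only [rotPt_inl, ne_eq, inl.injEq, Prod.mk.injEq, not_and]
    rintro - rfl
    exact hx k rfl
  · simp

theorem IsArc.rotArc {p : Sym2 (MbarPt n)} (h : IsArc p) (m : ℤ) : IsArc (rotArc m p) := by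
  refine ⟨(Sym2.isDiag_map (rotPt_injective m)).not.mpr h.1, fun k i he => h.2 (k + m) i ?_⟩
  have := congrArg (_root_.rotArc (-m)) he
  rwa [rotArc_rotArc, add_neg_cancel, rotArc_zero, rotArc_mk, rotPt_inl, rotPt_inl,
    sub_neg_eq_add, sub_neg_eq_add, add_right_comm] at this

def TouchesSegment (i : Fin n) (p : Sym2 (MbarPt n)) : Prop :=
  ∃ c : ℤ, (inl (c, i) : MbarPt n) ∈ p

theorem TouchesSegment.rotArc {i : Fin n} {p : Sym2 (MbarPt n)} (h : TouchesSegment i p)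
    (m : ℤ) : TouchesSegment i (rotArc m p) :=
  let ⟨c, hc⟩ := h
  ⟨c - m, Sym2.mem_map.mpr ⟨_, hc, rfl⟩⟩

theorem TouchesSegment.eq_short_or_eq_inl {i : Fin n} {p : Sym2 (MbarPt n)} (hp : IsArc p)
    (h : TouchesSegment i p) :
    (∃ a g : ℤ, 2 ≤ g ∧ p = s(inl (a, i), inl (a + g, i))) ∨
      ∃ (u : ℤ) (x : MbarPt n), (∀ c, x ≠ inl (c, i)) ∧ p = s(inl (u, i), x) := by
  obtain ⟨u, hu⟩ := h
  obtain ⟨x, rfl⟩ := Sym2.mem_iff_exists.mp hu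
  by_cases hx : ∃ c, x = inl (c, i)
  · obtain ⟨c, rfl⟩ := hx
    have hu₁ : c ≠ u + 1 := by rintro rfl; exact hp.2 u i rfl
    have hc₁ : u ≠ c + 1 := by rintro rfl; exact hp.2 c i Sym2.eq_swap
    have huc : u ≠ c := by rintro rfl; exact hp.1 (Sym2.mk_isDiag_iff.mpr rfl)
    left
    rcases huc.lt_or_gt with h | h
    · exact ⟨u, c - u, by omega, by rw [add_sub_cancel]⟩
    · exact ⟨c, u - c, by omega, by rw [add_sub_cancel, Sym2.eq_swap]⟩
  · exact Or.inr ⟨u, x, not_exists.mp hx, rfl⟩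

theorem crosses_of_linPos_lt (i : Fin n) {x y z w : MbarPt n}
    (h₁ : linPos i x < linPos i z) (h₂ : linPos i z < linPos i y)
    (h₃ : linPos i w < linPos i x ∨ linPos i y < linPos i w) : Crosses s(x, y) s(z, w) :=
  let ⟨hzy, hwx⟩ := LinSBtw.of_lt h₁ h₂ h₃
  ⟨x, y, z, w, rfl, rfl, (cycSBtw_iff_linSBtw i).mpr hzy, (cycSBtw_iff_linSBtw i).mpr hwx⟩

theorem Crosses.symm {p q : Sym2 (MbarPt n)} (h : Crosses p q) : Crosses q p := by
  obtain ⟨x, y, z, w, rfl, rfl, h₁, h₂⟩ := h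
  obtain ⟨h₃, h₄⟩ := LinSBtw.swap h₁ h₂
  exact ⟨z, w, y, x, rfl, Sym2.eq_swap, h₃, h₄⟩

theorem Adj.symm {p q : Sym2 (MbarPt n)} (h : Adj p q) : Adj q p := by
  rcases h with h | ⟨hne, i, hp, hq⟩
  · exact Or.inl h.symm
  · exact Or.inr ⟨hne.symm, i, hq, hp⟩

theorem TouchesSegment.of_crosses {i : Fin n} {a b : ℤ} {p : Sym2 (MbarPt n)}
    (h : Crosses s(inl (a, i), inl (b, i)) p) : TouchesSegment i p := by
  obtain ⟨x, y, z, w, hxy, rfl, h₁, h₂⟩ := h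
  rw [cycSBtw_iff_linSBtw i] at h₁ h₂
  have hx : (i : ℝ) < linPos i x ∧ (i : ℝ) < linPos i y := by
    rcases Sym2.eq_iff.mp hxy with ⟨rfl, rfl⟩ | ⟨rfl, rfl⟩ <;>
      exact ⟨(linPos_inl_self_mem _ i).1, (linPos_inl_self_mem _ i).1⟩
  rcases h₁.lt_or_lt h₂ hx.1 hx.2 with h | h
  · obtain ⟨c, rfl⟩ := exists_eq_inl_of_lt_linPos h
    exact ⟨c, Sym2.mem_mk_left _ _⟩
  · obtain ⟨c, rfl⟩ := exists_eq_inl_of_lt_linPos h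
    exact ⟨c, Sym2.mem_mk_right _ _⟩

theorem crosses_short_of_lt_or_lt {i : Fin n} {v g : ℤ} (hg : 2 ≤ g) {y : MbarPt n}
    (hy : linPos i y < linPos i (inl (v - 1, i)) ∨ linPos i (inl (v - 1 + g, i)) < linPos i y) :
    Crosses s(inl (v - 1, i), inl (v - 1 + g, i)) s(inl (v, i), y) :=
  crosses_of_linPos_lt i (linPos_inl_strictMono i i (by omega))
    (linPos_inl_strictMono i i (by omega)) hy

theorem crosses_of_linPos_lt_of_lt {i : Fin n} {p a : ℤ} {x y : MbarPt n}
    (hy : linPos i y ≤ i) (hxy : linPos i x < linPos i y) (hpa : p < a) :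
    Crosses s(inl (p, i), x) s(inl (a, i), y) := by
  have := crosses_of_linPos_lt i hxy (hy.trans_lt (linPos_inl_self_mem p i).1)
    (Or.inr (linPos_inl_strictMono i i hpa))
  rwa [Sym2.eq_swap (a := x), Sym2.eq_swap (a := y)] at this

theorem adj_rotArc_one {i : Fin n} {p : Sym2 (MbarPt n)} (hp : IsArc p)
    (hpi : TouchesSegment i p) : Adj (rotArc 1 p) p := by
  rcases hpi.eq_short_or_eq_inl hp with ⟨a, g, hg, rfl⟩ | ⟨u, x, hx, rfl⟩
  · rw [rotArc_short]
    exact Or.inl (crosses_short_of_lt_or_lt hg (Or.inr (linPos_inl_strictMono i i (by omega))))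
  rcases x with ⟨w, j⟩ | j
  · exact Or.inl (crosses_of_linPos_lt_of_lt (linPos_le_of_ne hx)
      (linPos_inl_strictMono i j (by omega : w - 1 < w)) (by omega : u - 1 < u))
  · exact Or.inr ⟨by simp, j, by simp, by simp⟩

theorem exists_rotArc_eq_or_adj_of_not_short {i : Fin n} {u v : ℤ} {x y : MbarPt n}
    (hx : ∀ c, x ≠ inl (c, i)) (hy : ∀ c, y ≠ inl (c, i)) :
    ∃ t, rotArc t s(inl (u, i), x) = s(inl (v, i), y) ∨
      Adj (rotArc t s(inl (u, i), x)) s(inl (v, i), y) := by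
  rcases lt_or_ge (linPos i (rotPt (u - (v - 1)) x)) (linPos i y) with h | h₁
  · refine ⟨u - (v - 1), Or.inr (Or.inl ?_)⟩
    rw [rotArc_inl_sub]
    exact crosses_of_linPos_lt_of_lt (linPos_le_of_ne hy) h (by omega)
  rcases lt_or_ge (linPos i y) (linPos i (rotPt (u - (v + 1)) x)) with h | h₂
  · refine ⟨u - (v + 1), Or.inr (Or.inl ?_)⟩
    rw [rotArc_inl_sub]
    exact (crosses_of_linPos_lt_of_lt (linPos_le_of_ne (rotPt_ne_inl hx _)) h (by omega)).symm
  -- Neither rotation works only if two steps of rotation do not move `x` past `y`; then `x` is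
  -- an accumulation point, equal to `y`.
  refine ⟨u - v, Or.inl ?_⟩
  rw [rotArc_inl_sub]
  rcases x with ⟨w, j⟩ | j
  · have := linPos_inl_strictMono i j (by omega : w - (u - (v - 1)) < w - (u - (v + 1)))
    simp only [rotPt_inl] at h₁ h₂ this
    linarith
  · rw [rotPt_inr] at h₁ h₂ ⊢
    rw [linPos_injective i (le_antisymm h₂ h₁)]

theorem exists_rotArc_eq_or_adj {i : Fin n} {a b : Sym2 (MbarPt n)} (ha : IsArc a) (hb : IsArc b)
    (hai : TouchesSegment i a) (hbi : TouchesSegment i b) :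
    ∃ t, rotArc t a = b ∨ Adj (rotArc t a) b := by
  rcases hai.eq_short_or_eq_inl ha with ⟨a₀, g, hg, rfl⟩ | ⟨u, x, hx, rfl⟩ <;>
    rcases hbi.eq_short_or_eq_inl hb with ⟨b₀, g', hg', rfl⟩ | ⟨v, y, hy, rfl⟩
  · refine ⟨a₀ - (b₀ + g' - 1), Or.inr (Or.inl ?_)⟩
    rw [rotArc_short, sub_sub_cancel, Sym2.eq_swap (a := inl (b₀, i))]
    exact crosses_short_of_lt_or_lt hg (Or.inl (linPos_inl_strictMono i i (by omega)))
  · refine ⟨a₀ - (v - 1), Or.inr (Or.inl ?_)⟩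
    rw [rotArc_short, sub_sub_cancel]
    exact crosses_short_of_lt_or_lt hg
      (Or.inl ((linPos_le_of_ne hy).trans_lt (linPos_inl_self_mem _ i).1))
  · refine ⟨u - (b₀ + 1), Or.inr (Or.inl ?_)⟩
    rw [rotArc_inl_sub, Sym2.eq_swap]
    exact crosses_of_linPos_lt i
      ((linPos_le_of_ne (rotPt_ne_inl hx _)).trans_lt (linPos_inl_self_mem b₀ i).1)
      (linPos_inl_strictMono i i (by omega)) (Or.inr (linPos_inl_strictMono i i (by omega)))
  · exact exists_rotArc_eq_or_adj_of_not_short hx hy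

theorem subset_rClos (S : Set (Sym2 (MbarPt n))) : S ⊆ RClos S :=
  fun p hp => ⟨p, hp, 0, (rotArc_zero p).symm⟩

theorem rotArc_mem_rClos {S : Set (Sym2 (MbarPt n))} {p : Sym2 (MbarPt n)} (hp : p ∈ RClos S)
    (m : ℤ) : rotArc m p ∈ RClos S := by
  obtain ⟨q, hq, t, rfl⟩ := hp
  exact ⟨q, hq, t + m, rotArc_rotArc m t q⟩

theorem rClos_mono {S T : Set (Sym2 (MbarPt n))} (h : S ⊆ T) : RClos S ⊆ RClos T := by
  rintro _ ⟨p, hp, t, rfl⟩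
  exact ⟨p, h hp, t, rfl⟩

theorem isArc_of_mem_rClos {S : Set (Sym2 (MbarPt n))} (hS : ∀ p ∈ S, IsArc p)
    {p : Sym2 (MbarPt n)} (hp : p ∈ RClos S) : IsArc p := by
  obtain ⟨q, hq, t, rfl⟩ := hp
  exact (hS q hq).rotArc t

theorem exists_adjChain_iff_reachIn (T : Set (Sym2 (MbarPt n))) (p q : Sym2 (MbarPt n)) :
    (∃ m, AdjChain T m p q) ↔ ReachIn Adj T p q := by
  constructor
  · rintro ⟨m, h⟩
    induction m generalizing p with
    | zero => exact h ▸ .refl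
    | succ m ih =>
      obtain ⟨r, hr, hpr, hrq⟩ := h
      exact .head ⟨hpr, hr⟩ (ih _ hrq)
  · intro h
    induction h using Relation.ReflTransGen.head_induction_on with
    | refl => exact ⟨0, rfl⟩
    | head hpr _ ih =>
      obtain ⟨m, hm⟩ := ih
      exact ⟨m + 1, _, hpr.2, hpr.1, hm⟩

theorem reachIn_rotArc {T : Set (Sym2 (MbarPt n))} (hT : ∀ p ∈ T, IsArc p) {i : Fin n}
    {p : Sym2 (MbarPt n)} (hp : p ∈ RClos T) (hpi : TouchesSegment i p) (t : ℤ) :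
    ReachIn Adj (RClos T) p (rotArc t p) := by
  have step (m : ℤ) : Adj (rotArc (m + 1) p) (rotArc m p) := by
    rw [← rotArc_rotArc]
    exact adj_rotArc_one (isArc_of_mem_rClos hT (rotArc_mem_rClos hp m)) (hpi.rotArc m)
  induction t using Int.induction_on with
  | zero => rw [rotArc_zero]
  | succ k ih => exact ih.tail ⟨(step k).symm, rotArc_mem_rClos hp _⟩
  | pred k ih =>
    refine ih.tail ⟨?_, rotArc_mem_rClos hp _⟩
    simpa using step (-k - 1)

theorem reachIn_of_touchesSegment {T : Set (Sym2 (MbarPt n))} (hT : ∀ p ∈ T, IsArc p)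
    {i : Fin n} {p q : Sym2 (MbarPt n)} (hp : p ∈ RClos T) (hq : q ∈ RClos T)
    (hpi : TouchesSegment i p) (hqi : TouchesSegment i q) : ReachIn Adj (RClos T) p q := by
  obtain ⟨t, h | h⟩ :=
    exists_rotArc_eq_or_adj (isArc_of_mem_rClos hT hp) (isArc_of_mem_rClos hT hq) hpi hqi
  · exact h ▸ reachIn_rotArc hT hp hpi t
  · exact (reachIn_rotArc hT hp hpi t).tail ⟨h, hq⟩

end Arcs

section ShortArcRemoval

open Sum

variable {n : ℕ} {i : Fin n} {ℓ : Sym2 (MbarPt n)} {S : Set (Sym2 (MbarPt n))}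

def IsShortArcOn (i : Fin n) (ℓ : Sym2 (MbarPt n)) : Prop :=
  ∃ k k' : ℤ, ℓ = s(inl (k, i), inl (k', i))

theorem IsShortArcOn.rotArc (h : IsShortArcOn i ℓ) (t : ℤ) : IsShortArcOn i (rotArc t ℓ) := by
  obtain ⟨k, k', rfl⟩ := h
  exact ⟨k - t, k' - t, rfl⟩

theorem IsShortArcOn.touchesSegment (h : IsShortArcOn i ℓ) : TouchesSegment i ℓ := by
  obtain ⟨k, k', rfl⟩ := h
  exact ⟨k, Sym2.mem_mk_left _ _⟩

theorem IsShortArcOn.touchesSegment_of_adj (h : IsShortArcOn i ℓ) {p : Sym2 (MbarPt n)}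
    (hp : Adj ℓ p) : TouchesSegment i p := by
  obtain ⟨k, k', rfl⟩ := h
  rcases hp with hp | ⟨-, j, hj, -⟩
  · exact .of_crosses hp
  · simp at hj

theorem IsShortArcOn.exists_eq_inl_of_mem (h : IsShortArcOn i ℓ) {x : MbarPt n} (hx : x ∈ ℓ) :
    ∃ c, x = inl (c, i) := by
  obtain ⟨k, k', rfl⟩ := h
  rcases Sym2.mem_iff.mp hx with rfl | rfl
  exacts [⟨k, rfl⟩, ⟨k', rfl⟩]

theorem rClos_subset_union (hℓ : IsShortArcOn i ℓ) :
    RClos S ⊆ RClos (S \ {ℓ}) ∪ {b | IsShortArcOn i b} := by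
  rintro _ ⟨p, hp, t, rfl⟩
  by_cases hpℓ : p = ℓ
  · exact Or.inr (hpℓ ▸ hℓ.rotArc t)
  · exact Or.inl ⟨p, ⟨hp, hpℓ⟩, t, rfl⟩

theorem reachIn_rClos_diff (hS : ∀ p ∈ S, IsArc p) (hℓ : IsShortArcOn i ℓ)
    {p q : Sym2 (MbarPt n)} (h : ReachIn Adj (RClos S) p q) (hq : q ∈ RClos (S \ {ℓ})) :
    (p ∈ RClos (S \ {ℓ}) → ReachIn Adj (RClos (S \ {ℓ})) p q) ∧
      (IsShortArcOn i p → ∃ w ∈ {w ∈ RClos (S \ {ℓ}) | TouchesSegment i w},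
        ReachIn Adj (RClos (S \ {ℓ})) w q) :=
  reachIn_of_reachIn_union (B := {b | IsShortArcOn i b})
    (W := {w ∈ RClos (S \ {ℓ}) | TouchesSegment i w}) (fun _ _ => Adj.symm)
    (fun _ hw _ hw' => reachIn_of_touchesSegment (fun p hp => hS p hp.1) hw.1 hw'.1 hw.2 hw'.2)
    (fun _ hb _ ha hba => ⟨ha, hb.touchesSegment_of_adj hba⟩)
    (fun _ hb => ⟨hb.1, hb.2.touchesSegment⟩)
    (h.mono (rClos_subset_union hℓ)) hq

theorem ConnectedArcs.diff (hS : ∀ p ∈ S, IsArc p) (hℓ : IsShortArcOn i ℓ)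
    (hconn : ConnectedArcs S) : ConnectedArcs (S \ {ℓ}) := by
  intro p hp q hq
  have hpq := hconn p (rClos_mono Set.sdiff_subset hp) q (rClos_mono Set.sdiff_subset hq)
  rw [exists_adjChain_iff_reachIn] at hpq ⊢
  exact (reachIn_rClos_diff hS hℓ hpq hq).1 hp

theorem exists_touchesSegment_rClos_diff (hS : ∀ p ∈ S, IsArc p) (hℓ : IsShortArcOn i ℓ)
    (hℓS : ℓ ∈ S) (hconn : ConnectedArcs S) (horb : CompleteOrbit S) :
    ∃ w ∈ RClos (S \ {ℓ}), TouchesSegment i w := by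
  obtain ⟨q, hq, hiq⟩ := horb (inr i)
  have hqT : q ∈ RClos (S \ {ℓ}) := (rClos_subset_union hℓ hq).resolve_right fun h => by
    simpa using h.exists_eq_inl_of_mem hiq
  have hℓq := (exists_adjChain_iff_reachIn _ _ _).mp (hconn ℓ (subset_rClos S hℓS) q hq)
  obtain ⟨w, hw, -⟩ := (reachIn_rClos_diff hS hℓ hℓq hqT).2 hℓ
  exact ⟨w, hw⟩

theorem CompleteOrbit.diff (hℓ : IsShortArcOn i ℓ) (horb : CompleteOrbit S)
    (hw : ∃ w ∈ RClos (S \ {ℓ}), TouchesSegment i w) : CompleteOrbit (S \ {ℓ}) := by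
  intro x
  by_cases hx : ∃ c, x = inl (c, i)
  · obtain ⟨c, rfl⟩ := hx
    obtain ⟨w, hw, c₀, hc₀⟩ := hw
    exact ⟨rotArc (c₀ - c) w, rotArc_mem_rClos hw _, Sym2.mem_map.mpr ⟨_, hc₀, by simp⟩⟩
  · obtain ⟨q, hq, hxq⟩ := horb x
    rcases rClos_subset_union hℓ hq with hq | hq
    · exact ⟨q, hq, hxq⟩
    · exact absurd (hq.exists_eq_inl_of_mem hxq) hx

end ShortArcRemoval

theorem no_short_arc_in_minimal_generator_general (n : ℕ)
    (S : Finset (Sym2 (MbarPt n)))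
    (harc : ∀ p ∈ S, IsArc p)
    (hconn : ConnectedArcs (↑S : Set (Sym2 (MbarPt n))))
    (horb : CompleteOrbit (↑S : Set (Sym2 (MbarPt n))))
    (hmin : MinimalArcSet (↑S : Set (Sym2 (MbarPt n)))) :
    ∀ p ∈ S, ¬ IsShortArc p := by
  rintro ℓ hℓS ⟨k, k', i, hk⟩
  have hℓ : IsShortArcOn i ℓ := ⟨k, k', hk⟩
  exact hmin ℓ hℓS ⟨hconn.diff harc hℓ,
    horb.diff hℓ (exists_touchesSegment_rClos_diff harc hℓ hℓS hconn horb)⟩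

/-- Corollary 5.5 of the paper: if `S` is a finite set of arcs of `M̄ₙ`
(`n ≥ 1`) which is connected, has complete orbit and is minimal, then no element of `S`
is a short arc. Equivalently, an indecomposable object of the Paquette–Yıldırım category
`C̄ₙ` corresponding to a short arc cannot be a direct summand of a minimal strong
generator of `C̄ₙ`. -/
theorem no_short_arc_in_minimal_generator (n : ℕ) (hn : 1 ≤ n)
    (S : Finset (Sym2 (MbarPt n)))
    (harc : ∀ p ∈ S, IsArc p)
    (hconn : ConnectedArcs (↑S : Set (Sym2 (MbarPt n))))
    (horb : CompleteOrbit (↑S : Set (Sym2 (MbarPt n))))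
    (hmin : MinimalArcSet (↑S : Set (Sym2 (MbarPt n)))) :
    ∀ p ∈ S, ¬ IsShortArc p :=
  no_short_arc_in_minimal_generator_general n S harc hconn horb hmin
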